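/- Divisibility form of the integrality of fraction-free elimination: let A be an n×n matrix over a commutative ring. For every 1 ≤ k ≤ n−1 and all indices i, j with k < i, j ≤ n, the leading principal minor p_{k-1}(A) divides m_{k-1}(k,k) · m_{k-1}(i,j) − m_{k-1}(i,k) · m_{k-1}(k,j) in the ring. -/

import Mathlib

/-- The leading principal minor of order `k` of an `n × n` matrix `A`. -/
def pminor {R : Type*} [CommRing R] {n : ℕ} (A : Matrix (Fin n) (Fin n) R)
    (k : ℕ) (h : k ≤ n) : R :=
  (A.submatrix (Fin.castLE h) (Fin.castLE h)).det

/-- Index map selecting (0-indexed) rows `0,…,k-1` followed by `i`. -/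
def bIdx {n : ℕ} (k : ℕ) (h : k ≤ n) (i : Fin n) : Fin (k + 1) → Fin n :=
  fun r => if hr : (r : ℕ) < k then ⟨r, lt_of_lt_of_le hr h⟩ else i

/-- The bordered minor `m_k(i,j)` of `A`: the determinant of the `(k+1) × (k+1)`
submatrix of `A` on (1-indexed) rows `1,…,k,i` and columns `1,…,k,j`. -/
def bminor {R : Type*} [CommRing R] {n : ℕ} (A : Matrix (Fin n) (Fin n) R)
    (k : ℕ) (h : k ≤ n) (i j : Fin n) : R :=
  (A.submatrix (bIdx k h i) (bIdx k h j)).det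


/-! The divisibility comes from Sylvester's identity for a matrix `B` whose leading block `L` is
bordered by two rows and two columns: `det L * det B` equals the `2 × 2` determinant of the minors
obtained by bordering `L` with one of the extra rows and one of the extra columns. When `L` is
invertible, each such minor is `det L` times an entry of the Schur complement of `L`, and `det B` is
`det L` times the determinant of that Schur complement. The general case follows by specialising
the generic matrix over `ℤ[Xᵢⱼ]`, whose leading block becomes invertible over the fraction field. -/

namespace Matrix

variable {ι κ R S : Type*} [Fintype ι] [DecidableEq ι] [CommRing R] [CommRing S]

def borderedDet (B : Matrix (ι ⊕ Fin 2) (ι ⊕ Fin 2) R) (x y : Fin 2) : R :=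
  (B.submatrix (Sum.map id fun _ : Fin 1 => x) (Sum.map id fun _ : Fin 1 => y)).det

theorem borderedDet_map (f : R →+* S) (B : Matrix (ι ⊕ Fin 2) (ι ⊕ Fin 2) R) (x y : Fin 2) :
    borderedDet (B.map f) x y = f (borderedDet B x y) := by
  rw [borderedDet, borderedDet, RingHom.map_det]
  rfl

theorem det_toBlocks₁₁_map [Fintype κ] [DecidableEq κ] (f : R →+* S)
    (M : Matrix (ι ⊕ κ) (ι ⊕ κ) R) : (M.map f).toBlocks₁₁.det = f M.toBlocks₁₁.det := by
  rw [RingHom.map_det]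
  rfl

theorem borderedDet_eq_det_mul_schur (B : Matrix (ι ⊕ Fin 2) (ι ⊕ Fin 2) R)
    [Invertible B.toBlocks₁₁] (x y : Fin 2) :
    borderedDet B x y = B.toBlocks₁₁.det *
      (B.toBlocks₂₂ - B.toBlocks₂₁ * ⅟B.toBlocks₁₁ * B.toBlocks₁₂) x y := by
  have hblocks : B.submatrix (Sum.map id fun _ : Fin 1 => x) (Sum.map id fun _ : Fin 1 => y) =
      fromBlocks B.toBlocks₁₁ (B.toBlocks₁₂.submatrix id fun _ => y)
        (B.toBlocks₂₁.submatrix (fun _ => x) id)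
        (B.toBlocks₂₂.submatrix (fun _ => x) fun _ => y) := by
    ext (p | p) (q | q) <;> rfl
  rw [borderedDet, hblocks, det_fromBlocks₁₁, det_fin_one]
  simp [Matrix.mul_apply, Matrix.sub_apply]

theorem det_toBlocks₁₁_mul_det_of_invertible (B : Matrix (ι ⊕ Fin 2) (ι ⊕ Fin 2) R)
    [Invertible B.toBlocks₁₁] :
    B.toBlocks₁₁.det * B.det =
      borderedDet B 0 0 * borderedDet B 1 1 - borderedDet B 1 0 * borderedDet B 0 1 := by
  have hdet : B.det = B.toBlocks₁₁.det *
      (B.toBlocks₂₂ - B.toBlocks₂₁ * ⅟B.toBlocks₁₁ * B.toBlocks₁₂).det := by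
    conv_lhs => rw [← fromBlocks_toBlocks B]
    exact det_fromBlocks₁₁ _ _ _ _
  simp only [hdet, borderedDet_eq_det_mul_schur, det_fin_two]
  ring

theorem det_toBlocks₁₁_mvPolynomialX_ne_zero [Fintype κ] [DecidableEq κ] [Nontrivial R] :
    (mvPolynomialX (ι ⊕ κ) (ι ⊕ κ) R).toBlocks₁₁.det ≠ 0 := by
  have hrename : (mvPolynomialX (ι ⊕ κ) (ι ⊕ κ) R).toBlocks₁₁ =
      (mvPolynomialX ι ι R).map (MvPolynomial.rename (Prod.map Sum.inl Sum.inl)) := by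
    ext p q
    simp [toBlocks₁₁, mvPolynomialX_apply]
  rw [hrename, ← AlgHom.mapMatrix_apply, ← AlgHom.map_det]
  exact (map_ne_zero_iff _ (MvPolynomial.rename_injective _ (Sum.inl_injective.prodMap
    Sum.inl_injective))).2 (det_mvPolynomialX_ne_zero ι R)

theorem det_toBlocks₁₁_mul_det (B : Matrix (ι ⊕ Fin 2) (ι ⊕ Fin 2) R) :
    B.toBlocks₁₁.det * B.det =
      borderedDet B 0 0 * borderedDet B 1 1 - borderedDet B 1 0 * borderedDet B 0 1 := by
  let G := mvPolynomialX (ι ⊕ Fin 2) (ι ⊕ Fin 2) ℤ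
  have hG : G.toBlocks₁₁.det * G.det =
      borderedDet G 0 0 * borderedDet G 1 1 - borderedDet G 1 0 * borderedDet G 0 1 := by
    let K := FractionRing (MvPolynomial ((ι ⊕ Fin 2) × (ι ⊕ Fin 2)) ℤ)
    apply IsFractionRing.injective _ K
    have hunit : IsUnit (G.map (algebraMap _ K)).toBlocks₁₁.det := by
      rw [det_toBlocks₁₁_map, isUnit_iff_ne_zero, map_ne_zero_iff _ (IsFractionRing.injective _ K)]
      exact det_toBlocks₁₁_mvPolynomialX_ne_zero
    let := invertibleOfIsUnitDet _ hunit
    simpa only [det_toBlocks₁₁_map, borderedDet_map, RingHom.map_det, map_mul, map_sub,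
      RingHom.mapMatrix_apply]
      using det_toBlocks₁₁_mul_det_of_invertible (G.map (algebraMap _ K))
  have := congrArg (MvPolynomial.eval₂Hom (Int.castRingHom R) fun p => B p.1 p.2) hG
  rw [map_mul, map_sub, map_mul, map_mul, ← det_toBlocks₁₁_map, RingHom.map_det] at this
  simpa only [← borderedDet_map, RingHom.mapMatrix_apply, MvPolynomial.coe_eval₂Hom, G,
    mvPolynomialX_map_eval₂] using this

end Matrix

open Matrix

section BorderedMinors

variable {R : Type*} [CommRing R] {n : ℕ}

theorem bIdx_comp_finSumFinEquiv (s : ℕ) (h : s ≤ n) (a : Fin n) :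
    bIdx s h a ∘ finSumFinEquiv = Sum.elim (Fin.castLE h) fun _ : Fin 1 => a := by
  ext (p | p) <;> simp [bIdx]

theorem bminor_eq_det_submatrix_sumElim (A : Matrix (Fin n) (Fin n) R) (s : ℕ) (h : s ≤ n)
    (a b : Fin n) :
    bminor A s h a b = (A.submatrix (Sum.elim (Fin.castLE h) fun _ : Fin 1 => a)
      (Sum.elim (Fin.castLE h) fun _ : Fin 1 => b)).det := by
  rw [bminor, ← det_submatrix_equiv_self finSumFinEquiv, submatrix_submatrix,
    bIdx_comp_finSumFinEquiv, bIdx_comp_finSumFinEquiv]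

theorem borderedDet_submatrix_sumElim (A : Matrix (Fin n) (Fin n) R) (s : ℕ) (h : s ≤ n)
    (r c : Fin 2 → Fin n) (x y : Fin 2) :
    borderedDet (A.submatrix (Sum.elim (Fin.castLE h) r) (Sum.elim (Fin.castLE h) c)) x y =
      bminor A s h (r x) (c y) := by
  rw [borderedDet, submatrix_submatrix, Sum.elim_comp_map, Sum.elim_comp_map,
    bminor_eq_det_submatrix_sumElim]
  rfl

theorem pminor_dvd_bminor_mul_sub_bminor_mul (A : Matrix (Fin n) (Fin n) R) (s : ℕ)
    (hs : s < n) (i j : Fin n) :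
    pminor A s hs.le ∣ bminor A s hs.le ⟨s, hs⟩ ⟨s, hs⟩ * bminor A s hs.le i j -
      bminor A s hs.le i ⟨s, hs⟩ * bminor A s hs.le ⟨s, hs⟩ j := by
  let B := A.submatrix (Sum.elim (Fin.castLE hs.le) ![⟨s, hs⟩, i])
    (Sum.elim (Fin.castLE hs.le) ![⟨s, hs⟩, j])
  have hsylvester := det_toBlocks₁₁_mul_det B
  simp only [B, borderedDet_submatrix_sumElim, cons_val_zero, cons_val_one] at hsylvester
  exact ⟨B.det, hsylvester.symm⟩

end BorderedMinors

/-- Divisibility form of the integrality of fraction-free elimination: for any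
`n × n` matrix `A` over a commutative ring, `1 ≤ k ≤ n-1`, and 1-indexed indices
`i, j` with `k < i, j ≤ n`, the leading principal minor `p_{k-1}(A)` divides
`m_{k-1}(k,k) * m_{k-1}(i,j) - m_{k-1}(i,k) * m_{k-1}(k,j)`. -/
theorem stmt6 {R : Type*} [CommRing R] {n : ℕ} (A : Matrix (Fin n) (Fin n) R)
    (k : ℕ) (hk1 : 1 ≤ k) (hkn : k ≤ n - 1)
    (i j : Fin n) :
    pminor A (k - 1) (by omega) ∣
      bminor A (k - 1) (by omega) ⟨k - 1, by omega⟩ ⟨k - 1, by omega⟩ *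
          bminor A (k - 1) (by omega) i j -
        bminor A (k - 1) (by omega) i ⟨k - 1, by omega⟩ *
          bminor A (k - 1) (by omega) ⟨k - 1, by omega⟩ j :=
  pminor_dvd_bminor_mul_sub_bminor_mul A (k - 1) (by omega) i j
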